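/- arXiv:2603.08969 — 5 statements merged into one kernel-verified Lean document; each statement's English description precedes it below -/
import Mathlib

section
/- Using the connection coefficients of Lemma 1 and structure constants of the frame, the curvature operator R(X,Y)Z = ∇_X∇_Y Z - ∇_Y∇_X Z - ∇_{[X,Y]}Z satisfies: g(R(e₁,e₂)e₁,e₂) = -2, g(R(e₁,e₃)e₁,e₃) = 1, g(R(e₁,e₄)e₁,e₄) = 1, g(R(e₂,e₃)e₂,e₃) = 1, g(R(e₂,e₄)e₂,e₄) = 1, and g(R(e₃,e₄)e₃,e₄) = 4. -/
/-- The connection coefficients `Γᵢⱼᵏ` of Lemma 1 in the orthonormal frame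
`{e₁,…,e₄}` on `(F⁴,g)` (0-indexed): `∇_{eᵢ}eⱼ = ∑ₖ Γ i j k • eₖ`. -/
def Gam : Fin 4 → Fin 4 → Fin 4 → ℝ :=
  ![![![0,0,0,1], ![0,0,1,0], ![0,-1,0,0], ![-1,0,0,0]],
    ![![0,0,1,0], ![0,0,0,-1], ![-1,0,0,0], ![0,1,0,0]],
    ![![0,-1,0,0], ![1,0,0,0], ![0,0,0,2], ![0,0,-2,0]],
    ![![0,0,0,0], ![0,0,0,0], ![0,0,0,0], ![0,0,0,0]]]

/-- Structure constants of the frame, `[eᵢ,eⱼ] = ∑ₖ c i j k • eₖ`, determined by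
torsion-freeness: `c i j k = Γ i j k - Γ j i k`. -/
def structC (i j k : Fin 4) : ℝ := Gam i j k - Gam j i k

/-- The curvature components `Riem i j k l = g(R(eᵢ,eⱼ)eₖ, eₗ)`, where
`R(X,Y)Z = ∇_X∇_Y Z - ∇_Y∇_X Z - ∇_{[X,Y]}Z` and all connection coefficients
are constant in the frame. -/
def Riem (i j k l : Fin 4) : ℝ :=
  (∑ m : Fin 4, (Gam j k m * Gam i m l - Gam i k m * Gam j m l))
    - ∑ m : Fin 4, structC i j m * Gam m k l

/-- The Ricci curvature `Ric(eᵢ,eⱼ) = ∑ₐ g(R(eᵢ,eₐ)eₐ, eⱼ)` in the frame. -/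
def RicF (i j : Fin 4) : ℝ := ∑ a : Fin 4, Riem i a a j

/-- The sectional curvature components of `(F⁴,g)`:
`g(R(e₁,e₂)e₁,e₂) = -2`, `g(R(e₁,e₃)e₁,e₃) = 1`, `g(R(e₁,e₄)e₁,e₄) = 1`,
`g(R(e₂,e₃)e₂,e₃) = 1`, `g(R(e₂,e₄)e₂,e₄) = 1`, `g(R(e₃,e₄)e₃,e₄) = 4`. -/
theorem sectional_curvature_components :
    Riem 0 1 0 1 = -2 ∧ Riem 0 2 0 2 = 1 ∧ Riem 0 3 0 3 = 1 ∧
    Riem 1 2 1 2 = 1 ∧ Riem 1 3 1 3 = 1 ∧ Riem 2 3 2 3 = 4 := by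
  simp [Riem, structC, Gam, Fin.sum_univ_four]; norm_num
end

section
/- The mixed curvature components of (F⁴,g) satisfy g(R(e₃,e₄)e₁,e₂) = -2, g(R(e₁,e₃)e₂,e₄) = -1, g(R(e₂,e₃)e₁,e₄) = 1, g(R(e₁,e₄)e₂,e₃) = 1, g(R(e₂,e₄)e₁,e₃) = -1, and g(R(e₁,e₂)e₃,e₄) = -2. -/
/-- The mixed curvature components of `(F⁴,g)`:
`g(R(e₃,e₄)e₁,e₂) = -2`, `g(R(e₁,e₃)e₂,e₄) = -1`, `g(R(e₂,e₃)e₁,e₄) = 1`,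
`g(R(e₁,e₄)e₂,e₃) = 1`, `g(R(e₂,e₄)e₁,e₃) = -1`, `g(R(e₁,e₂)e₃,e₄) = -2`. -/
theorem mixed_curvature_components :
    Riem 2 3 0 1 = -2 ∧ Riem 0 2 1 3 = -1 ∧ Riem 1 2 0 3 = 1 ∧
    Riem 0 3 1 2 = 1 ∧ Riem 1 3 0 2 = -1 ∧ Riem 0 1 2 3 = -2 := by
  refine ⟨?_,?_,?_,?_,?_,?_⟩ <;> simp [Riem, structC, Gam, Fin.sum_univ_four] <;> norm_num
end

section
/- The Ricci curvature of (F⁴,g) in the orthonormal frame {e₁,...,e₄} is diagonal with Ric(e₁,e₁) = Ric(e₂,e₂) = 0 and Ric(e₃,e₃) = Ric(e₄,e₄) = -6, and all off-diagonal components Ric(eᵢ,eⱼ) (i ≠ j) vanish. -/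
/-!
All connection coefficients are integers, so the Ricci tensor can be computed in `ℤ`, where the
kernel evaluates it by `decide`; the formula for the curvature is built from ring operations
only, so the cast `ℤ →+* ℝ` carries the integer result over to `RicF`.
-/

namespace FrameConnection

variable {R S : Type*} [Ring R] [Ring S] {n : ℕ}

def structConst (Γ : Fin n → Fin n → Fin n → R) (i j k : Fin n) : R := Γ i j k - Γ j i k

def riemann (Γ : Fin n → Fin n → Fin n → R) (i j k l : Fin n) : R :=
  (∑ m, (Γ j k m * Γ i m l - Γ i k m * Γ j m l)) - ∑ m, structConst Γ i j m * Γ m k l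

def ricci (Γ : Fin n → Fin n → Fin n → R) (i j : Fin n) : R := ∑ a, riemann Γ i a a j

theorem ricci_map (f : R →+* S) (Γ : Fin n → Fin n → Fin n → R) (i j : Fin n) :
    ricci (fun i j k => f (Γ i j k)) i j = f (ricci Γ i j) := by
  simp only [ricci, riemann, structConst, map_sum, map_sub, map_mul]

end FrameConnection

open FrameConnection

def gamInt : Fin 4 → Fin 4 → Fin 4 → ℤ :=
  ![![![0,0,0,1], ![0,0,1,0], ![0,-1,0,0], ![-1,0,0,0]],
    ![![0,0,1,0], ![0,0,0,-1], ![-1,0,0,0], ![0,1,0,0]],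
    ![![0,-1,0,0], ![1,0,0,0], ![0,0,0,2], ![0,0,-2,0]],
    ![![0,0,0,0], ![0,0,0,0], ![0,0,0,0], ![0,0,0,0]]]

theorem gam_eq_intCast : Gam = fun i j k => (gamInt i j k : ℝ) := by
  ext i j k
  fin_cases i <;> fin_cases j <;> fin_cases k <;> simp [Gam, gamInt]

theorem ricF_eq_ricci : RicF = ricci Gam := rfl

theorem ricF_eq_intCast (i j : Fin 4) : RicF i j = ((ricci gamInt i j : ℤ) : ℝ) := by
  rw [ricF_eq_ricci, gam_eq_intCast]
  exact ricci_map (Int.castRingHom ℝ) gamInt i j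

theorem ricci_gamInt (i j : Fin 4) :
    ricci gamInt i j = if i = j then (if i = 0 ∨ i = 1 then 0 else -6) else 0 := by
  revert i j
  decide

/-- Lemma 2: the Ricci curvature of `(F⁴,g)` in the orthonormal frame is
`diag(0, 0, -6, -6)`, with all off-diagonal components vanishing. -/
theorem ricci_F4 (i j : Fin 4) :
    RicF i j = if i = j then (if i = 0 ∨ i = 1 then 0 else -6) else 0 := by
  rw [ricF_eq_intCast, ricci_gamInt]
  split_ifs <;> simp
end

section
/- A vector field X = X₁(s,t)e₁ + X₂(s,t)e₂ + X₃(s,t)e₃ + X₄(s,t)e₄ on F⁴ (components depending only on s and t) satisfies the rough Laplacian equation Σᵢ[∇_{eᵢ}∇_{eᵢ}X - ∇_{∇_{eᵢ}eᵢ}X] = 0 if and only if: 4t²X₁,tt + 4t²X₁,ss + 4tX₂,s - 3X₁ = 0, 4t²X₂,tt + 4t²X₂,ss - 4tX₁,s - 3X₂ = 0, 2t²X₃,tt + 2t²X₃,ss - 4tX₄,s - 3X₃ = 0, and 2t²X₄,tt + 2t²X₄,ss + 4tX₃,s - 3X₄ = 0, where subscripts s, t denote ordinary partial derivatives (note e₃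 = 2t∂_s, e₄ = 2t∂_t, so Xⱼ,ₛ here denotes ∂Xⱼ/∂s composed appropriately: e₃(Xⱼ) = 2t ∂Xⱼ/∂s). -/
/-- Partial derivative in `s` of a function of `(s,t)`. -/
noncomputable def ds (f : ℝ × ℝ → ℝ) (q : ℝ × ℝ) : ℝ := fderiv ℝ f q (1, 0)

/-- Partial derivative in `t` of a function of `(s,t)`. -/
noncomputable def dt (f : ℝ × ℝ → ℝ) (q : ℝ × ℝ) : ℝ := fderiv ℝ f q (0, 1)

/-- The derivative of a function of `(s,t)` along the frame field `eᵢ`: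
`e₁`, `e₂` kill such functions, `e₃ = 2t∂_s`, `e₄ = 2t∂_t`. -/
noncomputable def frameD : Fin 4 → (ℝ × ℝ → ℝ) → ℝ × ℝ → ℝ :=
  ![fun _ _ => 0, fun _ _ => 0,
    fun f q => 2 * q.2 * ds f q,
    fun f q => 2 * q.2 * dt f q]

/-- The `k`-th frame component of `∇_{eᵢ}X` for `X = ∑ⱼ Xⱼ(s,t) eⱼ`:
`(∇_{eᵢ}X)ₖ = eᵢ(Xₖ) + ∑ⱼ Γᵢⱼᵏ Xⱼ`. -/
noncomputable def nab (X : Fin 4 → ℝ × ℝ → ℝ) (i k : Fin 4) (q : ℝ × ℝ) : ℝ :=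
  frameD i (X k) q + ∑ j : Fin 4, Gam i j k * X j q

/-- The `k`-th frame component of the rough Laplacian
`∑ᵢ (∇_{eᵢ}∇_{eᵢ}X - ∇_{∇_{eᵢ}eᵢ}X)`, using `∑ᵢ ∇_{eᵢ}eᵢ = 2e₄`. -/
noncomputable def roughLap (X : Fin 4 → ℝ × ℝ → ℝ) (k : Fin 4) (q : ℝ × ℝ) : ℝ :=
  (∑ i : Fin 4, (frameD i (nab X i k) q + ∑ j : Fin 4, Gam i j k * nab X i j q))
    - 2 * nab X 3 k q

/- auxiliary lemmas -/

lemma aux_contDiff_ds {f : ℝ × ℝ → ℝ} (hf : ContDiff ℝ (⊤ : ℕ∞) f) : ContDiff ℝ (⊤ : ℕ∞) (ds f) :=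
  (hf.fderiv_right (by simp)).clm_apply contDiff_const

lemma aux_contDiff_dt {f : ℝ × ℝ → ℝ} (hf : ContDiff ℝ (⊤ : ℕ∞) f) : ContDiff ℝ (⊤ : ℕ∞) (dt f) :=
  (hf.fderiv_right (by simp)).clm_apply contDiff_const

lemma aux_ds_add {f g : ℝ × ℝ → ℝ} {q} (hf : DifferentiableAt ℝ f q)
    (hg : DifferentiableAt ℝ g q) : ds (fun q => f q + g q) q = ds f q + ds g q := by
  simp [ds, fderiv_fun_add hf hg]

lemma aux_dt_add {f g : ℝ × ℝ → ℝ} {q} (hf : DifferentiableAt ℝ f q)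
    (hg : DifferentiableAt ℝ g q) : dt (fun q => f q + g q) q = dt f q + dt g q := by
  simp [dt, fderiv_fun_add hf hg]

lemma aux_ds_const_mul {f : ℝ × ℝ → ℝ} {q} (c : ℝ) (hf : DifferentiableAt ℝ f q) :
    ds (fun q => c * f q) q = c * ds f q := by
  simp [ds, fderiv_const_mul hf]

lemma aux_dt_const_mul {f : ℝ × ℝ → ℝ} {q} (c : ℝ) (hf : DifferentiableAt ℝ f q) :
    dt (fun q => c * f q) q = c * dt f q := by
  simp [dt, fderiv_const_mul hf]

lemma aux_fderiv_tcoord (q : ℝ × ℝ) : fderiv ℝ (fun q : ℝ × ℝ => 2 * q.2) q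
    = (2 : ℝ) • (ContinuousLinearMap.snd ℝ ℝ ℝ) :=
  ((hasFDerivAt_snd (𝕜 := ℝ) (p := q) (E := ℝ) (F := ℝ)).const_mul (2:ℝ)).fderiv

lemma aux_ds_tmul {g : ℝ × ℝ → ℝ} {q} (hg : DifferentiableAt ℝ g q) :
    ds (fun q => 2 * q.2 * g q) q = 2 * q.2 * ds g q := by
  have h1 : DifferentiableAt ℝ (fun q : ℝ × ℝ => 2 * q.2) q := by fun_prop
  simp [ds, fderiv_fun_mul h1 hg, aux_fderiv_tcoord]

lemma aux_dt_tmul {g : ℝ × ℝ → ℝ} {q} (hg : DifferentiableAt ℝ g q) :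
    dt (fun q => 2 * q.2 * g q) q = 2 * g q + 2 * q.2 * dt g q := by
  have h1 : DifferentiableAt ℝ (fun q : ℝ × ℝ => 2 * q.2) q := by fun_prop
  simp [dt, fderiv_fun_mul h1 hg, aux_fderiv_tcoord]
  ring

lemma aux_diff_tmul {g : ℝ × ℝ → ℝ} (hg : ContDiff ℝ (⊤ : ℕ∞) g) (q : ℝ × ℝ) :
    DifferentiableAt ℝ (fun q : ℝ × ℝ => 2 * q.2 * g q) q :=
  (((contDiff_const.mul contDiff_snd).mul hg).differentiable (by simp)) q

lemma aux_diff_cmul {g : ℝ × ℝ → ℝ} (c : ℝ) (hg : ContDiff ℝ (⊤ : ℕ∞) g) (q : ℝ × ℝ) :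
    DifferentiableAt ℝ (fun q : ℝ × ℝ => c * g q) q :=
  ((contDiff_const.mul hg).differentiable (by simp)) q

lemma aux_ds_nab2 {X : Fin 4 → ℝ × ℝ → ℝ} (hX : ∀ j, ContDiff ℝ (⊤ : ℕ∞) (X j))
    {k b : Fin 4} {c : ℝ} (h : nab X 2 k = fun q => 2 * q.2 * ds (X k) q + c * X b q)
    (q : ℝ × ℝ) :
    ds (nab X 2 k) q = 2 * q.2 * ds (ds (X k)) q + c * ds (X b) q := by
  rw [h, aux_ds_add (aux_diff_tmul (aux_contDiff_ds (hX k)) q)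
    (aux_diff_cmul c (hX b) q), aux_ds_tmul (((aux_contDiff_ds (hX k)).differentiable (by simp)) q),
    aux_ds_const_mul c (((hX b).differentiable (by simp)) q)]

lemma aux_dt_nab3 {X : Fin 4 → ℝ × ℝ → ℝ} (hX : ∀ j, ContDiff ℝ (⊤ : ℕ∞) (X j))
    {k : Fin 4} (h : nab X 3 k = fun q => 2 * q.2 * dt (X k) q) (q : ℝ × ℝ) :
    dt (nab X 3 k) q = 2 * dt (X k) q + 2 * q.2 * dt (dt (X k)) q := by
  rw [h, aux_dt_tmul (((aux_contDiff_dt (hX k)).differentiable (by simp)) q)]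

lemma aux_nab3 (X : Fin 4 → ℝ × ℝ → ℝ) (k : Fin 4) :
    nab X 3 k = fun q => 2 * q.2 * dt (X k) q := by
  fin_cases k <;>
  · funext q
    simp [nab, frameD, Gam, Fin.sum_univ_four, Matrix.vecHead, Matrix.vecTail]

lemma aux_nab20 (X : Fin 4 → ℝ × ℝ → ℝ) :
    nab X 2 0 = fun q => 2 * q.2 * ds (X 0) q + 1 * X 1 q := by
  funext q
  simp [nab, frameD, Gam, Fin.sum_univ_four, Matrix.vecHead, Matrix.vecTail]

lemma aux_nab21 (X : Fin 4 → ℝ × ℝ → ℝ) :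
    nab X 2 1 = fun q => 2 * q.2 * ds (X 1) q + (-1) * X 0 q := by
  funext q
  simp [nab, frameD, Gam, Fin.sum_univ_four, Matrix.vecHead, Matrix.vecTail]

lemma aux_nab22 (X : Fin 4 → ℝ × ℝ → ℝ) :
    nab X 2 2 = fun q => 2 * q.2 * ds (X 2) q + (-2) * X 3 q := by
  funext q
  simp [nab, frameD, Gam, Fin.sum_univ_four, Matrix.vecHead, Matrix.vecTail]

lemma aux_nab23 (X : Fin 4 → ℝ × ℝ → ℝ) :
    nab X 2 3 = fun q => 2 * q.2 * ds (X 3) q + 2 * X 2 q := by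
  funext q
  simp [nab, frameD, Gam, Fin.sum_univ_four, Matrix.vecHead, Matrix.vecTail]

lemma aux_fd0 (f : ℝ × ℝ → ℝ) (q : ℝ × ℝ) : frameD 0 f q = 0 := by simp [frameD]
lemma aux_fd1 (f : ℝ × ℝ → ℝ) (q : ℝ × ℝ) : frameD 1 f q = 0 := by simp [frameD]
lemma aux_fd2 (f : ℝ × ℝ → ℝ) (q : ℝ × ℝ) : frameD 2 f q = 2 * q.2 * ds f q := by
  simp [frameD]
lemma aux_fd3 (f : ℝ × ℝ → ℝ) (q : ℝ × ℝ) : frameD 3 f q = 2 * q.2 * dt f q := by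
  simp [frameD]

lemma aux_rough0 {X : Fin 4 → ℝ × ℝ → ℝ} (hX : ∀ j, ContDiff ℝ (⊤ : ℕ∞) (X j)) (q : ℝ × ℝ) :
    roughLap X 0 q = 4*q.2^2 * dt (dt (X 0)) q + 4*q.2^2 * ds (ds (X 0)) q
        + 4*q.2 * ds (X 1) q - 3 * X 0 q := by
  simp only [roughLap, Fin.sum_univ_four, aux_fd0, aux_fd1, aux_fd2, aux_fd3,
    aux_ds_nab2 hX (aux_nab20 X) q, aux_dt_nab3 hX (aux_nab3 X 0) q]
  simp [nab, frameD, Gam, Fin.sum_univ_four, Matrix.vecHead, Matrix.vecTail]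
  ring

lemma aux_rough1 {X : Fin 4 → ℝ × ℝ → ℝ} (hX : ∀ j, ContDiff ℝ (⊤ : ℕ∞) (X j)) (q : ℝ × ℝ) :
    roughLap X 1 q = 4*q.2^2 * dt (dt (X 1)) q + 4*q.2^2 * ds (ds (X 1)) q
        - 4*q.2 * ds (X 0) q - 3 * X 1 q := by
  simp only [roughLap, Fin.sum_univ_four, aux_fd0, aux_fd1, aux_fd2, aux_fd3,
    aux_ds_nab2 hX (aux_nab21 X) q, aux_dt_nab3 hX (aux_nab3 X 1) q]
  simp [nab, frameD, Gam, Fin.sum_univ_four, Matrix.vecHead, Matrix.vecTail]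
  ring

lemma aux_rough2 {X : Fin 4 → ℝ × ℝ → ℝ} (hX : ∀ j, ContDiff ℝ (⊤ : ℕ∞) (X j)) (q : ℝ × ℝ) :
    roughLap X 2 q = 2 * (2*q.2^2 * dt (dt (X 2)) q + 2*q.2^2 * ds (ds (X 2)) q
        - 4*q.2 * ds (X 3) q - 3 * X 2 q) := by
  simp only [roughLap, Fin.sum_univ_four, aux_fd0, aux_fd1, aux_fd2, aux_fd3,
    aux_ds_nab2 hX (aux_nab22 X) q, aux_dt_nab3 hX (aux_nab3 X 2) q]
  simp [nab, frameD, Gam, Fin.sum_univ_four, Matrix.vecHead, Matrix.vecTail]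
  ring

lemma aux_rough3 {X : Fin 4 → ℝ × ℝ → ℝ} (hX : ∀ j, ContDiff ℝ (⊤ : ℕ∞) (X j)) (q : ℝ × ℝ) :
    roughLap X 3 q = 2 * (2*q.2^2 * dt (dt (X 3)) q + 2*q.2^2 * ds (ds (X 3)) q
        + 4*q.2 * ds (X 2) q - 3 * X 3 q) := by
  simp only [roughLap, Fin.sum_univ_four, aux_fd0, aux_fd1, aux_fd2, aux_fd3,
    aux_ds_nab2 hX (aux_nab23 X) q, aux_dt_nab3 hX (aux_nab3 X 3) q]
  simp [nab, frameD, Gam, Fin.sum_univ_four, Matrix.vecHead, Matrix.vecTail]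
  ring

/-- Theorem 4.1: a vector field `X = X₁(s,t)e₁ + ⋯ + X₄(s,t)e₄` on `F⁴` is a
harmonic section (vanishing rough Laplacian) if and only if
`4t²X₁,tt + 4t²X₁,ss + 4tX₂,s - 3X₁ = 0`, `4t²X₂,tt + 4t²X₂,ss - 4tX₁,s - 3X₂ = 0`,
`2t²X₃,tt + 2t²X₃,ss - 4tX₄,s - 3X₃ = 0`, `2t²X₄,tt + 2t²X₄,ss + 4tX₃,s - 3X₄ = 0`,
where subscripts denote ordinary partial derivatives. -/
theorem harmonic_section_iff (X : Fin 4 → ℝ × ℝ → ℝ) (hX : ∀ j, ContDiff ℝ (⊤ : ℕ∞) (X j)) :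
    (∀ q : ℝ × ℝ, 0 < q.2 → ∀ k : Fin 4, roughLap X k q = 0) ↔
    (∀ q : ℝ × ℝ, 0 < q.2 →
      4*q.2^2 * dt (dt (X 0)) q + 4*q.2^2 * ds (ds (X 0)) q
        + 4*q.2 * ds (X 1) q - 3 * X 0 q = 0 ∧
      4*q.2^2 * dt (dt (X 1)) q + 4*q.2^2 * ds (ds (X 1)) q
        - 4*q.2 * ds (X 0) q - 3 * X 1 q = 0 ∧
      2*q.2^2 * dt (dt (X 2)) q + 2*q.2^2 * ds (ds (X 2)) q
        - 4*q.2 * ds (X 3) q - 3 * X 2 q = 0 ∧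
      2*q.2^2 * dt (dt (X 3)) q + 2*q.2^2 * ds (ds (X 3)) q
        + 4*q.2 * ds (X 2) q - 3 * X 3 q = 0) := by
  constructor
  · intro h q hq
    have h0 := h q hq 0; have h1 := h q hq 1
    have h2 := h q hq 2; have h3 := h q hq 3
    rw [aux_rough0 hX q] at h0
    rw [aux_rough1 hX q] at h1
    rw [aux_rough2 hX q] at h2
    rw [aux_rough3 hX q] at h3
    exact ⟨h0, h1, by linarith, by linarith⟩
  · intro h q hq k
    obtain ⟨h0, h1, h2, h3⟩ := h q hq
    fin_cases k
    · show roughLap X 0 q = 0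
      rw [aux_rough0 hX q]; linarith
    · show roughLap X 1 q = 0
      rw [aux_rough1 hX q]; linarith
    · show roughLap X 2 q = 0
      rw [aux_rough2 hX q]; linarith
    · show roughLap X 3 q = 0
      rw [aux_rough3 hX q]; linarith
end

section
/- Let f(t) be a smooth function on (0,∞). The vector field ζ₃ = f(t)∂_s on F⁴ is a harmonic section (vanishing rough Laplacian) if and only if f(t) = c₁ t^{3/2 + √7/2} + c₂ t^{3/2 - √7/2} for some constants c₁, c₂ ∈ ℝ. -/
open Real Set Filter

/-- Auxiliary: a function with vanishing derivative on `Ioi 0` is constant there. -/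
lemma const_on_Ioi_of_hasDerivAt_zero {g : ℝ → ℝ}
    (h : ∀ x ∈ Set.Ioi (0:ℝ), HasDerivAt g 0 x) {x y : ℝ}
    (hx : x ∈ Set.Ioi (0:ℝ)) (hy : y ∈ Set.Ioi (0:ℝ)) : g x = g y := by
  refine (convex_Ioi (0:ℝ)).is_const_of_fderivWithin_eq_zero
    (fun z hz => ((h z hz).differentiableAt).differentiableWithinAt)
    (fun z hz => ?_) hx hy
  rw [fderivWithin_of_isOpen isOpen_Ioi hz, (h z hz).hasFDerivAt.fderiv]
  ext
  simp

/-- Auxiliary: derivative of `x ↦ c * x ^ r` (rpow) at positive points. -/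
lemma hasDerivAt_const_mul_rpow (c r : ℝ) {x : ℝ} (hx : 0 < x) :
    HasDerivAt (fun y : ℝ => c * y ^ r) (c * (r * x ^ (r - 1))) x :=
  (Real.hasDerivAt_rpow_const (p := r) (Or.inl hx.ne')).const_mul c

/-- The vector field `ζ₃ = f(t)∂_s` on `F⁴` corresponds to `X₃ = f(t)/(2t)` in the
orthonormal frame (since `∂_s = e₃/(2t)`), and it is a harmonic section (vanishing
rough Laplacian) if and only if `u = f/(2t)` satisfies the Euler equation
`2t²u'' - 3u = 0`, whose general solution yields
`f(t) = c₁ t^{3/2 + √7/2} + c₂ t^{3/2 - √7/2}`. -/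
theorem zeta3_harmonic_iff (f : ℝ → ℝ) (hf : ContDiffOn ℝ (⊤ : ℕ∞) f (Set.Ioi 0)) :
    (∀ t : ℝ, 0 < t →
        2 * t^2 * deriv (deriv (fun u : ℝ => f u / (2*u))) t - 3 * (f t / (2*t)) = 0)
      ↔ ∃ c₁ c₂ : ℝ, ∀ t : ℝ, 0 < t →
          f t = c₁ * t ^ ((3 + Real.sqrt 7)/2) + c₂ * t ^ ((3 - Real.sqrt 7)/2) := by
  set s7 := Real.sqrt 7 with hs7def
  have hs7pos : 0 < s7 := Real.sqrt_pos.mpr (by norm_num)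
  have hs7sq : s7 * s7 = 7 := Real.mul_self_sqrt (by norm_num)
  set r₁ : ℝ := (1 + s7) / 2 with hr₁
  set r₂ : ℝ := (1 - s7) / 2 with hr₂
  have hr₁eq : r₁ * (r₁ - 1) = 3 / 2 := by rw [hr₁]; nlinarith [hs7sq]
  have hr₂eq : r₂ * (r₂ - 1) = 3 / 2 := by rw [hr₂]; nlinarith [hs7sq]
  have hsum : r₁ + r₂ = 1 := by rw [hr₁, hr₂]; ring
  set u : ℝ → ℝ := fun x => f x / (2 * x) with hu_def
  constructor
  · -- forward direction
    intro h
    -- u is smooth on Ioi 0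
    have hu : ContDiffOn ℝ (⊤ : ℕ∞) u (Set.Ioi 0) := by
      apply hf.div (contDiffOn_const.mul contDiffOn_id)
      intro x hx
      have : (0:ℝ) < x := hx
      positivity
    have huD : ∀ x ∈ Set.Ioi (0:ℝ), HasDerivAt u (deriv u x) x := fun x hx =>
      ((hu.differentiableOn (by simp) x hx).differentiableAt
        (isOpen_Ioi.mem_nhds hx)).hasDerivAt
    have hu' : ContDiffOn ℝ (⊤ : ℕ∞) (deriv u) (Set.Ioi 0) :=
      hu.deriv_of_isOpen isOpen_Ioi (by simp)
    have hu'D : ∀ x ∈ Set.Ioi (0:ℝ), HasDerivAt (deriv u) (deriv (deriv u) x) x := fun x hx =>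
      ((hu'.differentiableOn (by simp) x hx).differentiableAt
        (isOpen_Ioi.mem_nhds hx)).hasDerivAt
    -- the ODE : u'' = 3 u / (2 x²)
    have hODE : ∀ x : ℝ, 0 < x → deriv (deriv u) x = 3 * u x / (2 * x ^ 2) := by
      intro x hx
      have H := h x hx
      have hux : f x / (2 * x) = u x := rfl
      rw [hux] at H
      rw [eq_div_iff (by positivity : (2 * x ^ 2 : ℝ) ≠ 0)]
      linear_combination H
    -- the two "Wronskian" quantities
    set a : ℝ → ℝ := fun x => u x * (r₂ * x ^ (r₂ - 1)) - deriv u x * x ^ r₂ with ha_def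
    set b : ℝ → ℝ := fun x => deriv u x * x ^ r₁ - u x * (r₁ * x ^ (r₁ - 1)) with hb_def
    have key : ∀ r : ℝ, r * (r - 1) = 3 / 2 → ∀ x : ℝ, 0 < x →
        HasDerivAt (fun y => u y * (r * y ^ (r - 1)) - deriv u y * y ^ r)
          (0 : ℝ) x := by
      intro r hr x hx
      have h1 : HasDerivAt (fun y => u y * (r * y ^ (r - 1)))
          (deriv u x * (r * x ^ (r - 1)) + u x * (r * ((r - 1) * x ^ (r - 1 - 1)))) x :=
        (huD x hx).mul (hasDerivAt_const_mul_rpow r (r - 1) hx)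
      have h2 : HasDerivAt (fun y => deriv u y * y ^ r)
          (deriv (deriv u) x * x ^ r + deriv u x * (r * x ^ (r - 1))) x :=
        (hu'D x hx).mul (Real.hasDerivAt_rpow_const (p := r) (Or.inl hx.ne'))
      have h3 : HasDerivAt (fun y => u y * (r * y ^ (r - 1)) - deriv u y * y ^ r) _ x :=
        h1.sub h2
      convert h3 using 1
      rw [hODE x hx]
      have e1 : x ^ (r - 1 - 1) = x ^ r / x ^ 2 := by
        rw [show r - 1 - 1 = r - 2 by ring, Real.rpow_sub hx,
          show (2:ℝ) = ((2:ℕ):ℝ) by norm_num, Real.rpow_natCast]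
      rw [e1]
      have hx2 : (x:ℝ) ^ 2 ≠ 0 := by positivity
      field_simp
      linear_combination (-(f x * x⁻¹ * x ^ r)) * hr
    have haD : ∀ x ∈ Set.Ioi (0:ℝ), HasDerivAt a 0 x := fun x hx => key r₂ hr₂eq x hx
    have hbD : ∀ x ∈ Set.Ioi (0:ℝ), HasDerivAt b 0 x := by
      intro x hx
      have : HasDerivAt (fun y => -(u y * (r₁ * y ^ (r₁ - 1)) - deriv u y * y ^ r₁)) (-0) x :=
        (key r₁ hr₁eq x hx).neg
      simpa [hb_def, neg_sub] using this
    -- a and b are constants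
    refine ⟨-2 * a 1 / s7, -2 * b 1 / s7, ?_⟩
    intro t ht
    have haC : a t = a 1 := const_on_Ioi_of_hasDerivAt_zero haD ht (by norm_num)
    have hbC : b t = b 1 := const_on_Ioi_of_hasDerivAt_zero hbD ht (by norm_num)
    -- combine : a t * t^r₁ + b t * t^r₂ = -√7 * u t
    have hcomb : a t * t ^ r₁ + b t * t ^ r₂ = -s7 * u t := by
      have e1 : t ^ (r₂ - 1) * t ^ r₁ = 1 := by
        rw [← Real.rpow_add ht]
        rw [show r₂ - 1 + r₁ = 0 by rw [hr₁, hr₂]; ring, Real.rpow_zero]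
      have e2 : t ^ (r₁ - 1) * t ^ r₂ = 1 := by
        rw [← Real.rpow_add ht]
        rw [show r₁ - 1 + r₂ = 0 by rw [hr₁, hr₂]; ring, Real.rpow_zero]
      have e3 : t ^ r₂ * t ^ r₁ = t := by
        rw [← Real.rpow_add ht, show r₂ + r₁ = 1 by linarith [hsum], Real.rpow_one]
      simp only [ha_def, hb_def]
      have : u t * (r₂ * t ^ (r₂ - 1)) * t ^ r₁ - u t * (r₁ * t ^ (r₁ - 1)) * t ^ r₂
          = -s7 * u t := by
        rw [show u t * (r₂ * t ^ (r₂ - 1)) * t ^ r₁ = u t * r₂ * (t ^ (r₂ - 1) * t ^ r₁) by ring,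
          show u t * (r₁ * t ^ (r₁ - 1)) * t ^ r₂ = u t * r₁ * (t ^ (r₁ - 1) * t ^ r₂) by ring,
          e1, e2]
        rw [hr₁, hr₂]; ring
      calc (u t * (r₂ * t ^ (r₂ - 1)) - deriv u t * t ^ r₂) * t ^ r₁ +
            (deriv u t * t ^ r₁ - u t * (r₁ * t ^ (r₁ - 1))) * t ^ r₂
          = u t * (r₂ * t ^ (r₂ - 1)) * t ^ r₁ - u t * (r₁ * t ^ (r₁ - 1)) * t ^ r₂ := by ring
        _ = -s7 * u t := this
    -- extract f
    have hft : f t = 2 * t * u t := by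
      rw [hu_def]
      field_simp
    have hexp1 : t ^ ((3 + s7)/2) = t * t ^ r₁ := by
      rw [show (3 + s7)/2 = 1 + r₁ by rw [hr₁]; ring, Real.rpow_add ht, Real.rpow_one]
    have hexp2 : t ^ ((3 - s7)/2) = t * t ^ r₂ := by
      rw [show (3 - s7)/2 = 1 + r₂ by rw [hr₂]; ring, Real.rpow_add ht, Real.rpow_one]
    rw [hft, hexp1, hexp2]
    have hut : u t = -(a 1 * t ^ r₁ + b 1 * t ^ r₂) / s7 := by
      rw [← haC, ← hbC]
      field_simp
      linarith [hcomb]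
    rw [hut]
    field_simp
    ring
  · -- reverse direction
    rintro ⟨c₁, c₂, hc⟩ t ht
    set g : ℝ → ℝ := fun x => c₁ / 2 * x ^ r₁ + c₂ / 2 * x ^ r₂ with hg_def
    set g₁ : ℝ → ℝ := fun x => c₁ / 2 * (r₁ * x ^ (r₁ - 1)) + c₂ / 2 * (r₂ * x ^ (r₂ - 1))
      with hg₁_def
    -- u agrees with g near t
    have hEq : u =ᶠ[nhds t] g := by
      filter_upwards [isOpen_Ioi.mem_nhds ht] with x hx
      have hx' : (0:ℝ) < x := hx
      rw [hu_def]
      simp only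
      rw [hc x hx']
      have e1 : x ^ ((3 + s7)/2) = x * x ^ r₁ := by
        rw [show (3 + s7)/2 = 1 + r₁ by rw [hr₁]; ring, Real.rpow_add hx', Real.rpow_one]
      have e2 : x ^ ((3 - s7)/2) = x * x ^ r₂ := by
        rw [show (3 - s7)/2 = 1 + r₂ by rw [hr₂]; ring, Real.rpow_add hx', Real.rpow_one]
      rw [e1, e2, hg_def]
      field_simp
    have hgD : ∀ x ∈ Set.Ioi (0:ℝ), HasDerivAt g (g₁ x) x := fun x hx =>
      (hasDerivAt_const_mul_rpow (c₁/2) r₁ hx).add (hasDerivAt_const_mul_rpow (c₂/2) r₂ hx)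
    have hEq2 : deriv g =ᶠ[nhds t] g₁ := by
      filter_upwards [isOpen_Ioi.mem_nhds ht] with x hx
      exact (hgD x hx).deriv
    have hder2 : deriv (deriv u) t = deriv g₁ t := by
      rw [(hEq.deriv.trans hEq2).deriv_eq]
    have hg₁D : HasDerivAt g₁
        (c₁ / 2 * (r₁ * ((r₁ - 1) * t ^ (r₁ - 1 - 1)))
          + c₂ / 2 * (r₂ * ((r₂ - 1) * t ^ (r₂ - 1 - 1)))) t := by
      exact ((hasDerivAt_const_mul_rpow r₁ (r₁ - 1) ht).const_mul (c₁/2)).add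
        ((hasDerivAt_const_mul_rpow r₂ (r₂ - 1) ht).const_mul (c₂/2))
    have hder2' : deriv g₁ t = c₁ / 2 * (r₁ * ((r₁ - 1) * t ^ (r₁ - 1 - 1)))
        + c₂ / 2 * (r₂ * ((r₂ - 1) * t ^ (r₂ - 1 - 1))) := hg₁D.deriv
    show 2 * t ^ 2 * deriv (deriv u) t - 3 * (f t / (2 * t)) = 0
    have hut : f t / (2 * t) = u t := rfl
    rw [hder2, hder2', hut, hEq.self_of_nhds, hg_def]
    simp only
    have e1 : t ^ (r₁ - 1 - 1) = t ^ r₁ / t ^ 2 := by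
      rw [show r₁ - 1 - 1 = r₁ - 2 by ring, Real.rpow_sub ht,
        show (2:ℝ) = ((2:ℕ):ℝ) by norm_num, Real.rpow_natCast]
    have e2 : t ^ (r₂ - 1 - 1) = t ^ r₂ / t ^ 2 := by
      rw [show r₂ - 1 - 1 = r₂ - 2 by ring, Real.rpow_sub ht,
        show (2:ℝ) = ((2:ℕ):ℝ) by norm_num, Real.rpow_natCast]
    rw [e1, e2]
    have ht2 : (t:ℝ) ^ 2 ≠ 0 := by positivity
    field_simp
    linear_combination (2 * c₁ * t ^ r₁) * hr₁eq + (2 * c₂ * t ^ r₂) * hr₂eq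
end
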